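/- Solution of the transport equation for the complex geometrical optics amplitude: let U ⊆ {x ∈ ℝ³ : (x₂,x₃) ≠ (0,0)} be open, let A : U → ℝ³ be continuous, and let φ, a : U → ℂ be C¹ and satisfy ζ(x)·(∇φ(x) + A(x)) = 0 and ζ(x)·∇a(x) = 0 for all x ∈ U, where the dot is the bilinear (unconjugated) product on ℂ³. Then the function w(x) = r(x)^{−1/2} e^{iφ(x)} a(x) satisfies the transport equation 2 ζ(x)·( D w(x) + A(x) w(x) ) + (1/r(x)) w(x) = 0 for all x ∈ U, where Dw = −i∇w. -/

import Mathlib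

noncomputable section

/-- Euclidean space `ℝ³`. -/
abbrev E3 : Type := EuclideanSpace ℝ (Fin 3)

/-- Partial derivative `∂ⱼ` of a complex-valued function. -/
def pdC (j : Fin 3) (f : E3 → ℂ) (x : E3) : ℂ := fderiv ℝ f x (EuclideanSpace.single j 1)

/-- `r(x) = √(x₂² + x₃²)` (coordinates indexed by `0,1,2`). -/
def rad (x : E3) : ℝ := Real.sqrt ((x 1) ^ 2 + (x 2) ^ 2)

/-- `ζ(x) = e₁ + i e_r(x) = (1, i x₂ / r(x), i x₃ / r(x)) ∈ ℂ³`. -/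
def ζc (x : E3) : Fin 3 → ℂ :=
  ![1, Complex.I * ((x 1 / rad x : ℝ) : ℂ), Complex.I * ((x 2 / rad x : ℝ) : ℂ)]

set_option maxHeartbeats 1000000 in
/-- the amplitude `w = r^{−1/2} e^{iφ} a` solves the transport equation
`2ζ·(Dw + Aw) + (1/r)w = 0`, given `ζ·(∇φ + A) = 0` and `ζ·∇a = 0`. -/
theorem transport_equation_amplitude
    (U : Set E3) (hUopen : IsOpen U) (hUsub : U ⊆ {x : E3 | (x 1, x 2) ≠ (0, 0)})
    (A : E3 → Fin 3 → ℝ) (φ a : E3 → ℂ)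
    (hA : ContinuousOn A U) (hφ : ContDiffOn ℝ 1 φ U) (ha : ContDiffOn ℝ 1 a U)
    (hφeq : ∀ x ∈ U, ∑ j, ζc x j * (pdC j φ x + (A x j : ℂ)) = 0)
    (haeq : ∀ x ∈ U, ∑ j, ζc x j * pdC j a x = 0) :
    ∀ x ∈ U,
      2 * (∑ j, ζc x j *
            (-Complex.I * pdC j (fun y =>
                ((rad y ^ (-(1:ℝ)/2) : ℝ) : ℂ) * Complex.exp (Complex.I * φ y) * a y) x
              + (A x j : ℂ) *
                (((rad x ^ (-(1:ℝ)/2) : ℝ) : ℂ) * Complex.exp (Complex.I * φ x) * a x)))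
        + ((rad x : ℂ))⁻¹ *
            (((rad x ^ (-(1:ℝ)/2) : ℝ) : ℂ) * Complex.exp (Complex.I * φ x) * a x) = 0 := by
  intro x hx
  have hxne : (x 1, x 2) ≠ ((0 : ℝ), (0 : ℝ)) := hUsub hx
  have hor : x 1 ≠ 0 ∨ x 2 ≠ 0 := by
    by_contra h
    push_neg at h
    exact hxne (by simp [h.1, h.2])
  have hspos : 0 < (x 1)^2 + (x 2)^2 := by rcases hor with h | h <;> positivity
  have hne : (x 1)^2 + (x 2)^2 ≠ 0 := hspos.ne'
  have hrpos : 0 < rad x := Real.sqrt_pos.2 hspos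
  have hφd : DifferentiableAt ℝ φ x :=
    (hφ.contDiffAt (hUopen.mem_nhds hx)).differentiableAt one_ne_zero
  have had : DifferentiableAt ℝ a x :=
    (ha.contDiffAt (hUopen.mem_nhds hx)).differentiableAt one_ne_zero
  have h1 : HasFDerivAt (fun y : E3 => y 1) (EuclideanSpace.proj (1 : Fin 3) : E3 →L[ℝ] ℝ) x := by
    have := (EuclideanSpace.proj (1 : Fin 3) : E3 →L[ℝ] ℝ).hasFDerivAt (x := x)
    simpa [PiLp.proj_apply] using this
  have h2 : HasFDerivAt (fun y : E3 => y 2) (EuclideanSpace.proj (2 : Fin 3) : E3 →L[ℝ] ℝ) x := by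
    have := (EuclideanSpace.proj (2 : Fin 3) : E3 →L[ℝ] ℝ).hasFDerivAt (x := x)
    simpa [PiLp.proj_apply] using this
  have hg : HasFDerivAt (fun y : E3 => (y 1)^2 + (y 2)^2)
      ((x 1 • (EuclideanSpace.proj (1 : Fin 3) : E3 →L[ℝ] ℝ)
        + x 1 • (EuclideanSpace.proj (1 : Fin 3) : E3 →L[ℝ] ℝ))
       + (x 2 • (EuclideanSpace.proj (2 : Fin 3) : E3 →L[ℝ] ℝ)
        + x 2 • (EuclideanSpace.proj (2 : Fin 3) : E3 →L[ℝ] ℝ))) x := by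
    simp only [pow_two]; exact (h1.mul h1).add (h2.mul h2)
  have hrad0 := (Real.hasDerivAt_sqrt hne).comp_hasFDerivAt x hg
  obtain ⟨Lr, hrad, hL0, hL1, hL2⟩ :
      ∃ L : E3 →L[ℝ] ℝ, HasFDerivAt rad L x
        ∧ L (EuclideanSpace.single 0 1) = 0
        ∧ L (EuclideanSpace.single 1 1) = x 1 / rad x
        ∧ L (EuclideanSpace.single 2 1) = x 2 / rad x := by
    refine ⟨_, hrad0, ?_, ?_, ?_⟩ <;>
      · simp [ContinuousLinearMap.smul_apply, ContinuousLinearMap.add_apply,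
          PiLp.proj_apply, EuclideanSpace.single_apply, rad]
        try field_simp
        try ring
  have hρ : HasFDerivAt (fun y : E3 => rad y ^ (-(1:ℝ)/2))
      ((-(1:ℝ)/2 * rad x ^ (-(1:ℝ)/2 - 1)) • Lr) x :=
    hrad.rpow_const (Or.inl hrpos.ne')
  have hρC : HasFDerivAt (fun y : E3 => ((rad y ^ (-(1:ℝ)/2) : ℝ) : ℂ))
      (Complex.ofRealCLM.comp ((-(1:ℝ)/2 * rad x ^ (-(1:ℝ)/2 - 1)) • Lr)) x :=
    Complex.ofRealCLM.hasFDerivAt.comp x hρ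
  have hE : HasFDerivAt (fun y : E3 => Complex.exp (Complex.I * φ y))
      (Complex.exp (Complex.I * φ x) • (Complex.I • fderiv ℝ φ x)) x :=
    (hφd.hasFDerivAt.const_mul Complex.I).cexp
  have hw := (hρC.mul hE).mul had.hasFDerivAt
  have hpd : ∀ j, pdC j (fun y =>
        ((rad y ^ (-(1:ℝ)/2) : ℝ) : ℂ) * Complex.exp (Complex.I * φ y) * a y) x
      = (((rad x ^ (-(1:ℝ)/2) : ℝ) : ℂ) * Complex.exp (Complex.I * φ x)) * pdC j a x
        + a x * ( ((rad x ^ (-(1:ℝ)/2) : ℝ) : ℂ) *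
              (Complex.exp (Complex.I * φ x) * (Complex.I * pdC j φ x))
            + Complex.exp (Complex.I * φ x) *
              ((-(1:ℝ)/2 * rad x ^ (-(1:ℝ)/2 - 1) * Lr (EuclideanSpace.single j 1) : ℝ) : ℂ)) := by
    intro j
    have e : fderiv ℝ (fun y => ((rad y ^ (-(1:ℝ)/2) : ℝ) : ℂ) * Complex.exp (Complex.I * φ y) * a y) x = _ := hw.fderiv
    rw [pdC, e]
    simp [ContinuousLinearMap.add_apply, ContinuousLinearMap.smul_apply,
      ContinuousLinearMap.comp_apply, Complex.ofRealCLM_apply, smul_eq_mul,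
      Complex.real_smul, pdC]
    ring
  have Hφ := hφeq x hx
  have Ha := haeq x hx
  have Ksq : ((x 1 : ℝ) : ℂ)^2 + ((x 2 : ℝ) : ℂ)^2 = ((rad x : ℝ) : ℂ)^2 := by
    have h : (rad x)^2 = (x 1)^2 + (x 2)^2 := Real.sq_sqrt hspos.le
    exact_mod_cast h.symm
  have K2 : ((rad x : ℝ) : ℂ)⁻¹ * ((rad x ^ (-(1:ℝ)/2) : ℝ) : ℂ)
      = ((rad x ^ (-(1:ℝ)/2 - 1) : ℝ) : ℂ) := by
    rw [Real.rpow_sub hrpos, Real.rpow_one]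
    push_cast
    ring
  have hR : ((rad x : ℝ) : ℂ) ≠ 0 := by exact_mod_cast hrpos.ne'
  simp only [Fin.sum_univ_three, ζc, Matrix.cons_val_zero, Matrix.cons_val_one,
    Matrix.head_cons, Matrix.cons_val_two, Matrix.tail_cons] at Hφ Ha ⊢
  rw [hpd 0, hpd 1, hpd 2, hL0, hL1, hL2]
  push_cast at Hφ Ha ⊢
  set R := ((rad x : ℝ) : ℂ)
  set ρ := ((rad x ^ (-(1:ℝ)/2) : ℝ) : ℂ)
  set ρ3 := ((rad x ^ (-(1:ℝ)/2 - 1) : ℝ) : ℂ)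
  set E := Complex.exp (Complex.I * φ x)
  linear_combination (2 * ρ * E * a x) * Hφ + (-2 * Complex.I * ρ * E) * Ha
    + (Complex.I ^ 2 * ρ3 * a x * E / R ^ 2) * Ksq + (E * a x) * K2
    + (-2 * ρ * E * a x * (pdC 0 φ x + Complex.I * (((x 1 : ℝ) : ℂ) / R) * pdC 1 φ x
        + Complex.I * (((x 2 : ℝ) : ℂ) / R) * pdC 2 φ x)
        + ρ3 * a x * E) * Complex.I_sq
    + (Complex.I ^ 2 * E * a x * ρ3 * (R * R⁻¹ + 1)) * (mul_inv_cancel₀ hR)
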